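/- arXiv:2603.07332 — 2 statements merged into one kernel-verified Lean document; each statement's English description precedes it below -/
import Mathlib

section
/- Let α, x_s, y_s, r be real numbers, set p = x_s·sin α + y_s·cos α, and assume r + p > 0. Then r + p ≤ √((r·sin α + x_s)² + (r·cos α + y_s)²) ≤ r + p + (x_s² + y_s²)/(2·(r + p)). In particular, the error of the RLOS-projection approximation of the slant range is nonnegative and bounded by (x_s² + y_s²)/(2·(r + p)). -/
/-- Quantitative bound on the RLOS-projection approximation of the slant range:
the exact slant range lies between `r + p` and `r + p + (x_s² + y_s²)/(2(r + p))`,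
where `p = x_s·sin α + y_s·cos α`. -/
theorem rlos_projection_bounds
    (α x_s y_s r : ℝ) (p : ℝ) (hp : p = x_s * Real.sin α + y_s * Real.cos α)
    (hpos : r + p > 0) :
    r + p ≤ Real.sqrt ((r * Real.sin α + x_s) ^ 2 + (r * Real.cos α + y_s) ^ 2) ∧
      Real.sqrt ((r * Real.sin α + x_s) ^ 2 + (r * Real.cos α + y_s) ^ 2)
        ≤ r + p + (x_s ^ 2 + y_s ^ 2) / (2 * (r + p)) := by
  have hpy := Real.sin_sq_add_cos_sq α
  have hS : (r * Real.sin α + x_s) ^ 2 + (r * Real.cos α + y_s) ^ 2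
      = (r + p) ^ 2 + (x_s ^ 2 + y_s ^ 2 - p ^ 2) := by
    subst hp; linear_combination r ^ 2 * hpy
  have hcs : p ^ 2 ≤ x_s ^ 2 + y_s ^ 2 := by
    subst hp
    nlinarith [sq_nonneg (x_s * Real.cos α - y_s * Real.sin α), hpy]
  constructor
  · rw [show r + p = Real.sqrt ((r + p) ^ 2) from (Real.sqrt_sq hpos.le).symm]
    apply Real.sqrt_le_sqrt
    rw [hS]; linarith
  · have hR : 0 ≤ r + p + (x_s ^ 2 + y_s ^ 2) / (2 * (r + p)) := by
      have : 0 ≤ (x_s ^ 2 + y_s ^ 2) / (2 * (r + p)) :=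
        div_nonneg (by positivity) (by linarith)
      linarith
    rw [show r + p + (x_s ^ 2 + y_s ^ 2) / (2 * (r + p))
        = Real.sqrt ((r + p + (x_s ^ 2 + y_s ^ 2) / (2 * (r + p))) ^ 2)
        from (Real.sqrt_sq hR).symm]
    apply Real.sqrt_le_sqrt
    rw [hS]
    have h2 : (2 * (r + p)) ≠ 0 := by positivity
    have hd : ((x_s ^ 2 + y_s ^ 2) / (2 * (r + p))) * (2 * (r + p)) = x_s ^ 2 + y_s ^ 2 :=
      div_mul_cancel₀ _ h2
    nlinarith [sq_nonneg p, sq_nonneg ((x_s ^ 2 + y_s ^ 2) / (2 * (r + p)))]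
end

section
/- Let x_r, x_s, y_r, y_s, z_r be real numbers with a = √((y_r − y_s)² + z_r²) > 0, and let r_s = √((x_r − x_s)² + (y_r − y_s)² + z_r²). Then for every real e, |√((x_r + e − x_s)² + (y_r − y_s)² + z_r²) − r_s − ((x_r − x_s)/r_s)·e| ≤ e²/(2·a). That is, the first-order Taylor approximation of the true slant range in the along-track localization error has remainder at most e²/(2·a). -/
set_option maxHeartbeats 1000000


/-- Quantitative remainder bound for the first-order Taylor expansion of the true
slant range in the along-track localization error `e`: the remainder is at most
`e²/(2a)` where `a = √((y_r − y_s)² + z_r²)`. -/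
theorem slant_range_taylor_remainder
    (x_r x_s y_r y_s z_r : ℝ)
    (a : ℝ) (ha : a = Real.sqrt ((y_r - y_s) ^ 2 + z_r ^ 2)) (hapos : a > 0)
    (r_s : ℝ) (hr : r_s = Real.sqrt ((x_r - x_s) ^ 2 + (y_r - y_s) ^ 2 + z_r ^ 2))
    (e : ℝ) :
    |Real.sqrt ((x_r + e - x_s) ^ 2 + (y_r - y_s) ^ 2 + z_r ^ 2) - r_s
        - (x_r - x_s) / r_s * e| ≤ e ^ 2 / (2 * a) := by
  set u : ℝ := x_r - x_s with hu
  set A : ℝ := (y_r - y_s) ^ 2 + z_r ^ 2 with hA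
  set S : ℝ := Real.sqrt ((x_r + e - x_s) ^ 2 + (y_r - y_s) ^ 2 + z_r ^ 2) with hS
  have hAnn : 0 ≤ A := by positivity
  have ha2 : a ^ 2 = A := by rw [ha]; exact Real.sq_sqrt hAnn
  have hApos : 0 < A := by nlinarith
  have hRnn : 0 ≤ r_s := by rw [hr]; exact Real.sqrt_nonneg _
  have hR2 : r_s ^ 2 = u ^ 2 + A := by
    rw [hr, Real.sq_sqrt (by positivity)]; ring
  have hRpos : 0 < r_s := by nlinarith
  have hRa : a ≤ r_s := by nlinarith [sq_nonneg u]
  have hSnn : 0 ≤ S := Real.sqrt_nonneg _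
  have hS2 : S ^ 2 = (u + e) ^ 2 + A := by
    rw [hS, Real.sq_sqrt (by positivity)]; ring
  have hX2 : (S * r_s) ^ 2 = (u ^ 2 + A) * ((u + e) ^ 2 + A) := by
    rw [mul_pow, hS2, hR2]; ring
  have hXnn : 0 ≤ S * r_s := mul_nonneg hSnn hRnn
  have hCS1 : u * (u + e) + A ≤ S * r_s := by
    nlinarith [mul_nonneg hApos.le (sq_nonneg e), sq_nonneg (S * r_s - (u * (u + e) + A)),
      sq_nonneg (S * r_s + (u * (u + e) + A))]
  have hCS2 : A - u * (u + e) ≤ S * r_s := by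
    nlinarith [mul_nonneg hApos.le (sq_nonneg (2 * u + e)),
      sq_nonneg (S * r_s - (A - u * (u + e))), sq_nonneg (S * r_s + (A - u * (u + e)))]
  set D : ℝ := S * r_s - (u * (u + e) + A) with hD
  have hDnn : 0 ≤ D := by linarith
  have hDT : D * (S * r_s + (u * (u + e) + A)) = A * e ^ 2 := by
    have : D * (S * r_s + (u * (u + e) + A)) = (S * r_s) ^ 2 - (u * (u + e) + A) ^ 2 := by
      rw [hD]; ring
    rw [this, hX2]; ring
  have hT : 2 * A ≤ S * r_s + (u * (u + e) + A) := by linarith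
  have hDle : D ≤ e ^ 2 / 2 := by
    nlinarith [mul_le_mul_of_nonneg_left hT hDnn]
  have hue : u / r_s * e * r_s = u * e := by
    field_simp
  have hrem : S - r_s - u / r_s * e = D / r_s := by
    rw [eq_div_iff hRpos.ne']
    rw [hD, sub_mul, sub_mul, hue]
    linear_combination -hR2
  rw [hrem, abs_le]
  constructor
  · have h1 : 0 ≤ D / r_s := div_nonneg hDnn hRnn
    have h2 : 0 ≤ e ^ 2 / (2 * a) := by positivity
    linarith
  · rw [div_le_div_iff₀ hRpos (by positivity)]
    nlinarith [sq_nonneg e, mul_le_mul_of_nonneg_left hRa hDnn]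
end
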